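/- Let P be a path in T with vertex sequence p(1),…,p(k), let u be a vertex not on P that is adjacent in T to the endpoint p(k), and let P' = P ∪ {u}. Assume 1 − λ·S̄(P') > 0. Then F(P') = F(P) + (α1 + (2·α2·β/vt)·w_{T_u}·(w(T) − w_{T_u}) − (1−β)·(α2/vt)·w_{T_u})·d(P,u) + α2·β·(Q̄(P') − Q̄(P)). -/

import Mathlib

open scoped ENNReal

noncomputable section

/-- A finite tree with positive edge lengths, nonnegative vertex weights,
and a positive cruising speed. -/
structure WeightedTree (V : Type*) [Fintype V] where
  G : SimpleGraph V
  isTree : G.IsTree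
  len : Sym2 V → ℝ
  len_pos : ∀ e ∈ G.edgeSet, 0 < len e
  w : V → ℝ
  w_nonneg : ∀ v, 0 ≤ w v
  vt : ℝ
  vt_pos : 0 < vt

namespace WeightedTree

variable {V : Type*} [Fintype V] [DecidableEq V] (T : WeightedTree V)

/-- `d x y`: the length of the unique path between `x` and `y`. -/
def d (x y : V) : ℝ :=
  (((T.isTree.existsUnique_path x y).choose).edges.map T.len).sum

/-- The closest vertex of the list `l` (the vertex sequence of a path) to `v`. -/
def closest (l : List V) (v : V) : V :=
  if h : ∃ u ∈ l, ∀ u' ∈ l, T.d u v ≤ T.d u' v then h.choose else v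

/-- `d(P,v)`: the distance from the path with vertex sequence `l` to `v`. -/
def dP (l : List V) (v : V) : ℝ := T.d (T.closest l v) v

/-- The weight of the branch of the vertex `q` with respect to the path with
vertex sequence `l`: the total weight of all vertices whose closest vertex on
the path is `q`. -/
def wBranch (l : List V) (q : V) : ℝ :=
  ∑ v ∈ Finset.univ.filter (fun v => T.closest l v = q), T.w v

/-- `w(T)`: total weight of the tree. -/
def wT : ℝ := ∑ v, T.w v

/-- `d̄_P(û,p) = ∑_j w_{T_{p(j)}} d(p(j), p)` for the path with vertex sequence `l`. -/
def dbar (l : List V) (p : V) : ℝ := (l.map (fun q => T.wBranch l q * T.d q p)).sum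

/-- `s_p(P) = (1/vt) d̄_P(û,p)` for a vertex `p` of the path. -/
def sOn (l : List V) (p : V) : ℝ := (1 / T.vt) * T.dbar l p

/-- `s_i(P) = (1/vt) d̄_P(û,p(i))`, where `p(i)` is the closest vertex of the path to `v_i`. -/
def s (l : List V) (v : V) : ℝ := T.sOn l (T.closest l v)

/-- Mean service time `S̄(P)`. -/
def Sbar (l : List V) : ℝ := ∑ v, T.w v * T.s l v

/-- Second moment `S̄²(P)` of the service time. -/
def S2bar (l : List V) : ℝ := ∑ v, T.w v * (T.s l v) ^ 2

/-- `T̄1(P) = (1/vt) ∑ w_i d(P, v_i)`. -/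
def T1 (l : List V) : ℝ := (1 / T.vt) * ∑ v, T.w v * T.dP l v

/-- `T̄2(P) = (1/vt) ∑ w_i d̄_P(û, p(i))`. -/
def T2 (l : List V) : ℝ := (1 / T.vt) * ∑ v, T.w v * T.dbar l (T.closest l v)

/-- The M/G/1 queueing delay `Q̄(P)`, valued in `[0,∞]`. -/
def Qbar (lam : ℝ) (l : List V) : ℝ≥0∞ :=
  if 0 < 1 - lam * T.Sbar l then
    ENNReal.ofReal (lam * T.S2bar l / (2 * (1 - lam * T.Sbar l)))
  else ⊤

/-- The M/G/1 queueing delay `Q̄(P)` as an extended real. -/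
def QbarE (lam : ℝ) (l : List V) : EReal :=
  if 0 < 1 - lam * T.Sbar l then
    ((lam * T.S2bar l / (2 * (1 - lam * T.Sbar l)) : ℝ) : EReal)
  else ⊤

/-- `|P|`: the total length of the path `P`. -/
def plen {a b : V} (P : T.G.Walk a b) : ℝ := (P.edges.map T.len).sum

/-- The objective `F(P) = α1·|P| + α2·(β·(Q̄(P)+T̄2(P)) + (1-β)·T̄1(P))`. -/
def F (α1 α2 β lam : ℝ) {a b : V} (P : T.G.Walk a b) : EReal :=
  ((α1 * T.plen P : ℝ) : EReal) +
    (α2 : EReal) *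
      ((β : EReal) * (T.QbarE lam P.support + ((T.T2 P.support : ℝ) : EReal)) +
        (((1 - β) * T.T1 P.support : ℝ) : EReal))

end WeightedTree

/-!
The closest vertex `p` of a walk `W` to a vertex `v` of a tree is a gate: `d(q,v) = d(q,p) + d(p,v)`
for every `q` on `W`, because the path from `v` to `p` meets `W` only in `p` and can be continued
inside `W` to `q`. Extending `P` by the edge `bu` moves exactly the branch `T_u` from the gate `b`
to the gate `u`. Hence `d(P,v)` drops by `d(b,u)` on `T_u`, `d̄` grows by `w_{T_u}·d(b,u)` at the
vertices of `P` and `d̄_{P'}(û,u) = d̄_P(û,b) + (w(T) - w_{T_u})·d(b,u)`; summing gives `T̄1` and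
`T̄2 = S̄` of `P'` in terms of those of `P`. Since `S̄` grows, `P` is stable when `P'` is, so both
queueing delays are finite and the identity holds in `ℝ`.
-/

open SimpleGraph

theorem SimpleGraph.Walk.IsPath.append {V : Type*} {G : SimpleGraph V} {x y z : V}
    {p : G.Walk x y} {q : G.Walk y z} (hp : p.IsPath) (hq : q.IsPath)
    (hmeet : ∀ a ∈ p.support, a ∈ q.support → a = y) : (p.append q).IsPath := by
  rw [Walk.isPath_def, Walk.support_append]
  refine hp.support_nodup.append hq.support_nodup.tail fun a ha hta => ?_
  obtain rfl := hmeet a ha (List.tail_subset _ hta)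
  have := hq.support_nodup
  rw [← q.cons_tail_support] at this
  exact (List.nodup_cons.1 this).1 hta

theorem SimpleGraph.Walk.exists_isPath_support_subset {V : Type*} [DecidableEq V]
    {G : SimpleGraph V} {a c p q : V} (W : G.Walk a c) (hp : p ∈ W.support)
    (hq : q ∈ W.support) : ∃ R : G.Walk p q, R.IsPath ∧ R.support ⊆ W.support := by
  let R := (W.dropUntil p hp).append (W.dropUntil q hq).reverse
  refine ⟨R.bypass, R.bypass_isPath,
    List.Subset.trans R.support_bypass_subset_support fun x hx => ?_⟩
  rw [Walk.mem_support_append_iff, Walk.support_reverse, List.mem_reverse] at hx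
  rcases hx with hx | hx <;> exact W.support_dropUntil_subset_support _ hx

namespace WeightedTree

variable {V : Type*} [Fintype V] (T : WeightedTree V)

theorem exists_isPath (x y : V) : ∃ W : T.G.Walk x y, W.IsPath :=
  (T.isTree.existsUnique_path x y).exists

theorem d_eq_plen {x y : V} {W : T.G.Walk x y} (hW : W.IsPath) : T.d x y = T.plen W := by
  have h := T.isTree.existsUnique_path x y
  rw [d, plen, h.unique h.choose_spec.1 hW]

theorem plen_nonneg {x y : V} (W : T.G.Walk x y) : 0 ≤ T.plen W :=
  List.sum_nonneg fun _ he => by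
    obtain ⟨e, he', rfl⟩ := List.mem_map.1 he
    exact (T.len_pos e (W.edges_subset_edgeSet he')).le

theorem plen_pos {x y : V} (W : T.G.Walk x y) (h : x ≠ y) : 0 < T.plen W := by
  cases W with
  | nil => exact absurd rfl h
  | cons hadj W =>
    rw [plen, Walk.edges_cons, List.map_cons, List.sum_cons]
    exact add_pos_of_pos_of_nonneg (T.len_pos _ (T.G.mem_edgeSet.2 hadj)) (T.plen_nonneg W)

theorem plen_append {x y z : V} (W₁ : T.G.Walk x y) (W₂ : T.G.Walk y z) :
    T.plen (W₁.append W₂) = T.plen W₁ + T.plen W₂ := by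
  simp [plen, Walk.edges_append]

theorem plen_reverse {x y : V} (W : T.G.Walk x y) : T.plen W.reverse = T.plen W := by
  simp [plen, Walk.edges_reverse]

theorem plen_concat {x y z : V} (W : T.G.Walk x y) (h : T.G.Adj y z) :
    T.plen (W.concat h) = T.plen W + T.len s(y, z) := by
  simp [plen, Walk.edges_concat]

theorem d_self (x : V) : T.d x x = 0 := by
  simp [T.d_eq_plen Walk.IsPath.nil, plen]

theorem d_comm (x y : V) : T.d x y = T.d y x := by
  obtain ⟨W, hW⟩ := T.exists_isPath y x
  rw [T.d_eq_plen hW, T.d_eq_plen hW.reverse, plen_reverse]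

theorem d_nonneg (x y : V) : 0 ≤ T.d x y := by
  obtain ⟨W, hW⟩ := T.exists_isPath x y
  exact T.d_eq_plen hW ▸ T.plen_nonneg W

theorem d_pos {x y : V} (h : x ≠ y) : 0 < T.d x y := by
  obtain ⟨W, hW⟩ := T.exists_isPath x y
  exact T.d_eq_plen hW ▸ T.plen_pos W h

theorem d_adj {x y : V} (h : T.G.Adj x y) : T.d x y = T.len s(x, y) := by
  rw [T.d_eq_plen (Walk.IsPath.nil.concat (by simpa using h.ne.symm) h), plen_concat]
  simp [plen]

variable [DecidableEq V]

theorem d_add_of_mem_support {x y z : V} {W : T.G.Walk x z} (hW : W.IsPath)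
    (hy : y ∈ W.support) : T.d x y + T.d y z = T.d x z := by
  rw [T.d_eq_plen (hW.takeUntil hy), T.d_eq_plen (hW.dropUntil hy), T.d_eq_plen hW, ← plen_append,
    Walk.take_spec]

def IsGate (l : List V) (v p : V) : Prop :=
  p ∈ l ∧ ∀ q ∈ l, T.d q v = T.d q p + T.d p v

theorem closest_spec {l : List V} (hl : l ≠ []) (v : V) :
    T.closest l v ∈ l ∧ ∀ q ∈ l, T.d (T.closest l v) v ≤ T.d q v := by
  have hex : ∃ p ∈ l, ∀ q ∈ l, T.d p v ≤ T.d q v := by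
    obtain ⟨p, hp, hmin⟩ :=
      l.toFinset.exists_min_image (T.d · v) (List.toFinset_nonempty_iff l |>.2 hl)
    exact ⟨p, List.mem_toFinset.1 hp, fun q hq => hmin q (List.mem_toFinset.2 hq)⟩
  rw [closest, dif_pos hex]
  exact hex.choose_spec

theorem closest_eq_of_isGate {l : List V} {v p : V} (h : T.IsGate l v p) :
    T.closest l v = p := by
  obtain ⟨hc, hmin⟩ := T.closest_spec (List.ne_nil_of_mem h.1) v
  by_contra hne
  have := h.2 _ hc
  have := hmin p h.1
  have := T.d_pos hne
  linarith

theorem isGate_closest {a c : V} (W : T.G.Walk a c) (v : V) :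
    T.IsGate W.support v (T.closest W.support v) := by
  set p := T.closest W.support v
  obtain ⟨hp, hmin⟩ := T.closest_spec W.support_ne_nil v
  refine ⟨hp, fun q hq => ?_⟩
  obtain ⟨A, hA⟩ := T.exists_isPath v p
  obtain ⟨R, hR, hRW⟩ := W.exists_isPath_support_subset hp hq
  -- a vertex of `W` on the path from `v` to `p` other than `p` would be closer to `v`
  have hmeet : ∀ x ∈ A.support, x ∈ R.support → x = p := by
    intro x hxA hxR
    have h1 := T.d_add_of_mem_support hA hxA
    have h2 := hmin x (hRW hxR)
    by_contra hne
    have := T.d_pos hne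
    rw [T.d_comm v x, T.d_comm v p] at h1
    linarith
  have hvq := T.d_eq_plen (hA.append hR hmeet)
  rw [plen_append, ← T.d_eq_plen hA, ← T.d_eq_plen hR] at hvq
  rw [T.d_comm q v, hvq, T.d_comm v p, T.d_comm q p]
  ring

theorem wBranch_eq_sum_ite (l : List V) (q : V) :
    T.wBranch l q = ∑ v, if T.closest l v = q then T.w v else 0 :=
  Finset.sum_filter _ _

theorem wT_sub_wBranch (l : List V) (q : V) :
    T.wT - T.wBranch l q = ∑ v, if T.closest l v = q then 0 else T.w v := by
  rw [wT, wBranch_eq_sum_ite, ← Finset.sum_sub_distrib]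
  exact Finset.sum_congr rfl fun v _ => by split_ifs <;> ring

theorem wBranch_nonneg (l : List V) (q : V) : 0 ≤ T.wBranch l q :=
  Finset.sum_nonneg fun v _ => T.w_nonneg v

theorem wBranch_le_wT (l : List V) (q : V) : T.wBranch l q ≤ T.wT := by
  have := T.wT_sub_wBranch l q
  have : 0 ≤ ∑ v, if T.closest l v = q then 0 else T.w v :=
    Finset.sum_nonneg fun v _ => by split_ifs <;> simp [T.w_nonneg v]
  linarith

theorem sum_mul_ite_closest (l : List V) (q : V) (A B : ℝ) :
    ∑ v, T.w v * (if T.closest l v = q then A else B) =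
      T.wBranch l q * A + (T.wT - T.wBranch l q) * B := by
  rw [wT_sub_wBranch, wBranch_eq_sum_ite, Finset.sum_mul, Finset.sum_mul, ← Finset.sum_add_distrib]
  exact Finset.sum_congr rfl fun v _ => by split_ifs <;> ring

theorem dbar_support_eq_sum {a c : V} {W : T.G.Walk a c} (hW : W.IsPath) (p : V) :
    T.dbar W.support p = ∑ v, T.w v * T.d (T.closest W.support v) p := by
  rw [dbar, ← List.sum_toFinset _ hW.support_nodup, ← Finset.sum_fiberwise_of_maps_to
    (s := Finset.univ) (g := T.closest W.support) fun v _ =>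
      List.mem_toFinset.2 (T.isGate_closest W v).1]
  refine Finset.sum_congr rfl fun q _ => ?_
  rw [wBranch, Finset.sum_mul]
  exact Finset.sum_congr rfl fun v hv => by rw [(Finset.mem_filter.1 hv).2]

theorem Sbar_eq_T2 (l : List V) : T.Sbar l = T.T2 l := by
  rw [Sbar, T2, Finset.mul_sum]
  exact Finset.sum_congr rfl fun v _ => by rw [s, sOn]; ring

section Concat

variable {a b u : V} {P : T.G.Walk a b}

theorem isGate_end (hadj : T.G.Adj b u) (hP : P.IsPath) (hu : u ∉ P.support) :
    T.IsGate P.support u b := by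
  refine ⟨P.end_mem_support, fun q hq => ?_⟩
  have hpath : ((P.dropUntil q hq).concat hadj).IsPath :=
    (hP.dropUntil hq).concat (fun h => hu (P.support_dropUntil_subset_support hq h)) hadj
  exact (T.d_add_of_mem_support hpath (by simp [Walk.support_concat])).symm

theorem dP_support_end (hadj : T.G.Adj b u) (hP : P.IsPath) (hu : u ∉ P.support) :
    T.dP P.support u = T.d b u := by
  rw [dP, T.closest_eq_of_isGate (T.isGate_end hadj hP hu)]

theorem closest_concat_mem_support (hadj : T.G.Adj b u) {v : V}
    (h : T.closest (P.concat hadj).support v ≠ u) :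
    T.closest (P.concat hadj).support v ∈ P.support := by
  set c := T.closest (P.concat hadj).support v
  have hc : c ∈ (P.concat hadj).support := (T.isGate_closest _ v).1
  rw [Walk.support_concat, List.mem_append, List.mem_singleton] at hc
  exact hc.resolve_right h

theorem closest_support_eq (hadj : T.G.Adj b u) (hP : P.IsPath) (hu : u ∉ P.support) (v : V) :
    T.closest P.support v = if T.closest (P.concat hadj).support v = u then b
      else T.closest (P.concat hadj).support v := by
  have hgate := T.isGate_closest (P.concat hadj) v
  have hsub : P.support ⊆ (P.concat hadj).support := P.support_subset_support_concat hadj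
  split_ifs with h
  · refine T.closest_eq_of_isGate ⟨P.end_mem_support, fun q hq => ?_⟩
    have hqv := hgate.2 q (hsub hq)
    have hbv := hgate.2 b (hsub P.end_mem_support)
    rw [h, (T.isGate_end hadj hP hu).2 q hq] at hqv
    rw [h] at hbv
    linarith
  · exact T.closest_eq_of_isGate
      ⟨T.closest_concat_mem_support hadj h, fun q hq => hgate.2 q (hsub hq)⟩

theorem dP_support_eq (hadj : T.G.Adj b u) (hP : P.IsPath) (hu : u ∉ P.support) (v : V) :
    T.dP P.support v = T.dP (P.concat hadj).support v +
      if T.closest (P.concat hadj).support v = u then T.d b u else 0 := by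
  rw [dP, dP, T.closest_support_eq hadj hP hu]
  split_ifs with h
  · have hbv := (T.isGate_closest (P.concat hadj) v).2 b
      (P.support_subset_support_concat hadj P.end_mem_support)
    rw [h] at hbv ⊢
    linarith
  · ring

theorem T1_support_eq (hadj : T.G.Adj b u) (hP : P.IsPath) (hu : u ∉ P.support) :
    T.T1 P.support = T.T1 (P.concat hadj).support +
      1 / T.vt * (T.wBranch (P.concat hadj).support u * T.d b u) := by
  simp only [T1, T.dP_support_eq hadj hP hu, mul_add, Finset.sum_add_distrib, wBranch_eq_sum_ite,
    Finset.sum_mul, mul_ite, ite_mul, mul_zero, zero_mul]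

theorem dbar_concat_of_mem (hadj : T.G.Adj b u) (hP : P.IsPath) (hu : u ∉ P.support) {p : V}
    (hp : p ∈ P.support) :
    T.dbar (P.concat hadj).support p =
      T.dbar P.support p + T.wBranch (P.concat hadj).support u * T.d b u := by
  rw [T.dbar_support_eq_sum (hP.concat hu hadj), T.dbar_support_eq_sum hP, wBranch_eq_sum_ite,
    Finset.sum_mul, ← Finset.sum_add_distrib]
  refine Finset.sum_congr rfl fun v _ => ?_
  rw [T.closest_support_eq hadj hP hu]
  split_ifs with h
  · rw [h, T.d_comm u p, (T.isGate_end hadj hP hu).2 p hp, T.d_comm p b]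
    ring
  · ring

theorem dbar_concat_end (hadj : T.G.Adj b u) (hP : P.IsPath) (hu : u ∉ P.support) :
    T.dbar (P.concat hadj).support u =
      T.dbar P.support b + (T.wT - T.wBranch (P.concat hadj).support u) * T.d b u := by
  rw [T.dbar_support_eq_sum (hP.concat hu hadj), T.dbar_support_eq_sum hP, wT_sub_wBranch,
    Finset.sum_mul, ← Finset.sum_add_distrib]
  refine Finset.sum_congr rfl fun v _ => ?_
  rw [T.closest_support_eq hadj hP hu]
  split_ifs with h
  · rw [h, T.d_self, T.d_self]
    ring
  · rw [(T.isGate_end hadj hP hu).2 _ (T.closest_concat_mem_support hadj h)]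
    ring

theorem dbar_concat_closest (hadj : T.G.Adj b u) (hP : P.IsPath) (hu : u ∉ P.support) (v : V) :
    T.dbar (P.concat hadj).support (T.closest (P.concat hadj).support v) =
      T.dbar P.support (T.closest P.support v) +
        (if T.closest (P.concat hadj).support v = u then
          T.wT - T.wBranch (P.concat hadj).support u
        else T.wBranch (P.concat hadj).support u) * T.d b u := by
  rw [T.closest_support_eq hadj hP hu]
  split_ifs with h
  · rw [h, T.dbar_concat_end hadj hP hu]
  · exact T.dbar_concat_of_mem hadj hP hu (T.closest_concat_mem_support hadj h)

theorem T2_concat (hadj : T.G.Adj b u) (hP : P.IsPath) (hu : u ∉ P.support) :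
    T.T2 (P.concat hadj).support = T.T2 P.support + 1 / T.vt *
      (2 * T.wBranch (P.concat hadj).support u * (T.wT - T.wBranch (P.concat hadj).support u) *
        T.d b u) := by
  simp only [T2, T.dbar_concat_closest hadj hP hu, mul_add, Finset.sum_add_distrib, ← mul_assoc,
    ← Finset.sum_mul, sum_mul_ite_closest]
  ring

theorem Sbar_support_le (hadj : T.G.Adj b u) (hP : P.IsPath) (hu : u ∉ P.support) :
    T.Sbar P.support ≤ T.Sbar (P.concat hadj).support := by
  rw [Sbar_eq_T2, Sbar_eq_T2, T.T2_concat hadj hP hu, le_add_iff_nonneg_right]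
  have := T.wBranch_nonneg (P.concat hadj).support u
  have := sub_nonneg.2 (T.wBranch_le_wT (P.concat hadj).support u)
  have := T.d_nonneg b u
  have := T.vt_pos
  positivity

end Concat

end WeightedTree

theorem F_concat_eq_general {V : Type*} [Fintype V] [DecidableEq V] (T : WeightedTree V)
    {a b u : V} (P : T.G.Walk a b) (hP : P.IsPath)
    (hadj : T.G.Adj b u) (hu : u ∉ P.support)
    (lam α1 α2 β : ℝ) (hlam : 0 < lam)
    (hstable : 0 < 1 - lam * T.Sbar (P.concat hadj).support) :
    T.F α1 α2 β lam (P.concat hadj) =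
      T.F α1 α2 β lam P +
        (((α1 + (2 * α2 * β / T.vt) * T.wBranch (P.concat hadj).support u *
              (T.wT - T.wBranch (P.concat hadj).support u)
            - (1 - β) * (α2 / T.vt) * T.wBranch (P.concat hadj).support u)
          * T.dP P.support u : ℝ) : EReal) +
        ((α2 * β : ℝ) : EReal) *
          (T.QbarE lam (P.concat hadj).support - T.QbarE lam P.support) := by
  have hstable' : 0 < 1 - lam * T.Sbar P.support := by
    have := mul_le_mul_of_nonneg_left (T.Sbar_support_le hadj hP hu) hlam.le
    linarith
  simp only [WeightedTree.F, WeightedTree.QbarE, if_pos hstable, if_pos hstable',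
    WeightedTree.plen_concat, ← T.d_adj hadj, T.dP_support_end hadj hP hu,
    T.T2_concat hadj hP hu, T.T1_support_eq hadj hP hu]
  norm_cast
  ring

/-- the exact change of the objective `F` when a path `P` is extended
by an adjacent vertex `u`, assuming the extended path is stable. -/
theorem F_concat_eq {V : Type*} [Fintype V] [DecidableEq V] (T : WeightedTree V)
    {a b u : V} (P : T.G.Walk a b) (hP : P.IsPath)
    (hadj : T.G.Adj b u) (hu : u ∉ P.support)
    (lam α1 α2 β : ℝ) (hlam : 0 < lam) (hα1 : 0 ≤ α1) (hα2 : 0 ≤ α2)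
    (hβ0 : 0 ≤ β) (hβ1 : β ≤ 1)
    (hstable : 0 < 1 - lam * T.Sbar (P.concat hadj).support) :
    T.F α1 α2 β lam (P.concat hadj) =
      T.F α1 α2 β lam P +
        (((α1 + (2 * α2 * β / T.vt) * T.wBranch (P.concat hadj).support u *
              (T.wT - T.wBranch (P.concat hadj).support u)
            - (1 - β) * (α2 / T.vt) * T.wBranch (P.concat hadj).support u)
          * T.dP P.support u : ℝ) : EReal) +
        ((α2 * β : ℝ) : EReal) *
          (T.QbarE lam (P.concat hadj).support - T.QbarE lam P.support) :=
  F_concat_eq_general T P hP hadj hu lam α1 α2 β hlam hstable
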